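/- arXiv:1710.03603 — 6 statements merged into one kernel-verified Lean document; each statement's English description precedes it below -/
import Mathlib

section
/- For every integer i ≥ 1, the sum over all pairs of integers (k,l) with k ≥ 1, l ≥ 0 and k + 2l = i of (-1)^{l+k-1} · k · 2^{k-1} · ( C(k+l, k) + C(k+l-1, k) ) equals (-1)^{i-1} · i². (In particular the sum equals 1 when i = 1 and equals -4 when i = 2.) -/
/-- Key binomial identity: `k·(C(k+l,k) + C(k+l-1,k)) = (k+2l)·C(k+l-1,l)`. -/
lemma genus_key (k l : ℕ) :
    k * ((k + l).choose k + (k + l - 1).choose k) = (k + 2 * l) * ((k + l - 1).choose l) := by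
  rcases k with _ | m
  · rcases l with _ | l'
    · simp
    · simp [Nat.choose_eq_zero_of_lt (Nat.lt_succ_self l')]
  · have hsub : m + 1 + l - 1 = m + l := by omega
    rw [hsub]
    have ha : (m + 1) * (m + l + 1).choose (m + 1) = (m + l + 1) * (m + l).choose m := by
      have := Nat.add_one_mul_choose_eq (m + l) m
      simpa [Nat.succ_eq_add_one, mul_comm] using this.symm
    have hb : (m + 1) * (m + l).choose (m + 1) = l * (m + l).choose m := by
      have := Nat.choose_succ_right_eq (m + l) m
      have h2 : m + l - m = l := by omega
      rw [h2] at this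
      calc (m + 1) * (m + l).choose (m + 1) = (m + l).choose (m + 1) * (m + 1) := by ring
        _ = (m + l).choose m * l := this
        _ = l * (m + l).choose m := by ring
    have hsymm : (m + l).choose l = (m + l).choose m := by
      have := Nat.choose_symm (show m ≤ m + l from Nat.le_add_right m l)
      rwa [Nat.add_sub_cancel_left] at this
    have hshow : (m + 1 + l).choose (m + 1) = (m + l + 1).choose (m + 1) := by
      congr 1; omega
    rw [hshow, hsymm, Nat.mul_add, ha, hb]
    ring

/-- The Chebyshev-type sum. -/
def chebA (n : ℕ) : ℤ :=
  ∑ l ∈ Finset.range (n + 1), (-1 : ℤ) ^ l * 2 ^ (n - 2 * l) * ((n - l).choose l : ℤ)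

lemma chebA_rec (n : ℕ) : chebA (n + 2) = 2 * chebA (n + 1) - chebA n := by
  have h0 : chebA (n + 2)
      = (∑ l ∈ Finset.range (n + 2),
          (-1 : ℤ) ^ (l + 1) * 2 ^ (n - 2 * l) * ((n + 1 - l).choose (l + 1) : ℤ))
        + 2 ^ (n + 2) := by
    rw [chebA, show n + 2 + 1 = (n + 2) + 1 from rfl, Finset.sum_range_succ']
    congr 1
    · apply Finset.sum_congr rfl
      intro l _
      have e1 : n + 2 - 2 * (l + 1) = n - 2 * l := by omega
      have e2 : n + 2 - (l + 1) = n + 1 - l := by omega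
      rw [e1, e2]
    · norm_num
  have h1 : (∑ l ∈ Finset.range (n + 2),
        (-1 : ℤ) ^ (l + 1) * 2 ^ (n - 2 * l) * ((n + 1 - l).choose (l + 1) : ℤ))
      = ∑ l ∈ Finset.range (n + 1),
        (-1 : ℤ) ^ (l + 1) * 2 ^ (n - 2 * l) * ((n + 1 - l).choose (l + 1) : ℤ) := by
    rw [Finset.sum_range_succ]
    have : (n + 1 - (n + 1)).choose (n + 1 + 1) = 0 := by
      simp
    rw [this]
    push_cast
    ring
  have h2 : ∀ l ∈ Finset.range (n + 1),
      (-1 : ℤ) ^ (l + 1) * 2 ^ (n - 2 * l) * ((n + 1 - l).choose (l + 1) : ℤ)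
      = -((-1 : ℤ) ^ l * 2 ^ (n - 2 * l) * ((n - l).choose l : ℤ))
        + (-1 : ℤ) ^ (l + 1) * 2 ^ (n - 2 * l) * ((n - l).choose (l + 1) : ℤ) := by
    intro l hl
    have hln : l ≤ n := by simpa [Nat.lt_succ_iff] using Finset.mem_range.mp hl
    have e : n + 1 - l = (n - l) + 1 := by omega
    rw [e, Nat.choose_succ_succ]
    push_cast
    ring
  have h3 : ∀ l ∈ Finset.range (n + 1),
      (-1 : ℤ) ^ (l + 1) * 2 ^ (n - 2 * l) * ((n - l).choose (l + 1) : ℤ)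
      = 2 * ((-1 : ℤ) ^ (l + 1) * 2 ^ (n + 1 - 2 * (l + 1)) * ((n + 1 - (l + 1)).choose (l + 1) : ℤ)) := by
    intro l hl
    have e2 : n + 1 - (l + 1) = n - l := by omega
    rw [e2]
    by_cases hc : 2 * l + 1 ≤ n
    · have e1 : n - 2 * l = (n + 1 - 2 * (l + 1)) + 1 := by omega
      rw [e1, pow_succ]
      ring
    · have hz : (n - l).choose (l + 1) = 0 := Nat.choose_eq_zero_of_lt (by omega)
      rw [hz]
      push_cast
      ring
  have h4 : chebA (n + 1)
      = (∑ l ∈ Finset.range (n + 1),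
          (-1 : ℤ) ^ (l + 1) * 2 ^ (n + 1 - 2 * (l + 1)) * ((n + 1 - (l + 1)).choose (l + 1) : ℤ))
        + 2 ^ (n + 1) := by
    rw [chebA, Finset.sum_range_succ']
    norm_num
  rw [h0, h1, Finset.sum_congr rfl h2, Finset.sum_add_distrib,
    Finset.sum_congr rfl h3, ← Finset.mul_sum, Finset.sum_neg_distrib]
  have h5 : (∑ l ∈ Finset.range (n + 1),
      (-1 : ℤ) ^ (l + 1) * 2 ^ (n + 1 - 2 * (l + 1)) * ((n + 1 - (l + 1)).choose (l + 1) : ℤ))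
      = chebA (n + 1) - 2 ^ (n + 1) := by
    rw [h4]; ring
  rw [h5]
  simp only [chebA]
  ring

lemma chebA_eq (n : ℕ) : chebA n = n + 1 := by
  induction n using Nat.strong_induction_on with
  | _ n ih =>
    match n with
    | 0 => simp [chebA]
    | 1 =>
      rw [chebA]
      rw [Finset.sum_range_succ, Finset.sum_range_succ, Finset.sum_range_zero]
      norm_num
    | (m + 2) =>
      have h1 := ih (m + 1) (by omega)
      have h0 := ih m (by omega)
      rw [chebA_rec, h1, h0]
      push_cast
      ring

lemma negpow_sub (a b : ℕ) (h : b ≤ a) :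
    ((-1 : ℤ)) ^ (a - b) = (-1) ^ a * (-1) ^ b := by
  have e : a = (a - b) + b := by omega
  rw [e, pow_add, Nat.add_sub_cancel, mul_assoc, ← pow_add]
  have : Even (b + b) := ⟨b, rfl⟩
  rw [this.neg_one_pow, mul_one]

/-- For every integer `i ≥ 1`, the sum over all pairs `(k, l)` with `k ≥ 1`, `l ≥ 0`
and `k + 2l = i` of `(-1)^(l+k-1) · k · 2^(k-1) · (C(k+l, k) + C(k+l-1, k))`
equals `(-1)^(i-1) · i²`. -/
theorem genus_decreasing_total_coefficient (i : ℕ) (hi : 1 ≤ i) :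
    ∑ p ∈ (Finset.range (i + 1) ×ˢ Finset.range (i + 1)).filter
        (fun p => 1 ≤ p.1 ∧ p.1 + 2 * p.2 = i),
      ((-1 : ℤ) ^ (p.2 + p.1 - 1) * p.1 * 2 ^ (p.1 - 1) *
        (((p.1 + p.2).choose p.1 : ℤ) + ((p.1 + p.2 - 1).choose p.1 : ℤ)))
    = (-1 : ℤ) ^ (i - 1) * (i : ℤ) ^ 2 := by
  have hstep : ∑ p ∈ (Finset.range (i + 1) ×ˢ Finset.range (i + 1)).filter
        (fun p => 1 ≤ p.1 ∧ p.1 + 2 * p.2 = i),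
      ((-1 : ℤ) ^ (p.2 + p.1 - 1) * p.1 * 2 ^ (p.1 - 1) *
        (((p.1 + p.2).choose p.1 : ℤ) + ((p.1 + p.2 - 1).choose p.1 : ℤ)))
      = ∑ l ∈ (Finset.range i).filter (fun l => 2 * l < i),
        (-1 : ℤ) ^ (i - 1) * (i : ℤ) *
          ((-1 : ℤ) ^ l * 2 ^ ((i - 1) - 2 * l) * (((i - 1) - l).choose l : ℤ)) := by
    apply Finset.sum_nbij' (fun p => p.2) (fun l => (i - 2 * l, l))
    · intro p hp
      simp only [Finset.mem_filter, Finset.mem_product, Finset.mem_range] at hp ⊢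
      omega
    · intro l hl
      simp only [Finset.mem_filter, Finset.mem_product, Finset.mem_range] at hl ⊢
      omega
    · intro p hp
      simp only [Finset.mem_filter, Finset.mem_product, Finset.mem_range] at hp
      obtain ⟨_, _, h2⟩ := hp
      ext <;> simp <;> omega
    · intro l hl
      rfl
    · intro p hp
      simp only [Finset.mem_filter, Finset.mem_product, Finset.mem_range] at hp
      obtain ⟨⟨_, _⟩, hk1, hkl⟩ := hp
      set k := p.1 with hk
      set l := p.2 with hl
      have hkey : (k : ℤ) * (((k + l).choose k : ℤ) + ((k + l - 1).choose k : ℤ))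
          = (i : ℤ) * (((k + l - 1).choose l : ℤ)) := by
        have h := genus_key k l
        rw [hkl] at h
        exact_mod_cast h
      have e2 : k + l - 1 = (i - 1) - l := by omega
      have esign : l + k - 1 = (i - 1) - l := by omega
      have epow : k - 1 = (i - 1) - 2 * l := by omega
      rw [esign, epow, negpow_sub (i - 1) l (by omega)]
      calc (-1 : ℤ) ^ (i - 1) * (-1 : ℤ) ^ l * (k : ℤ) * 2 ^ ((i - 1) - 2 * l) *
            (((k + l).choose k : ℤ) + ((k + l - 1).choose k : ℤ))
          = (-1 : ℤ) ^ (i - 1) * (-1 : ℤ) ^ l * 2 ^ ((i - 1) - 2 * l) *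
            ((k : ℤ) * (((k + l).choose k : ℤ) + ((k + l - 1).choose k : ℤ))) := by ring
        _ = (-1 : ℤ) ^ (i - 1) * (-1 : ℤ) ^ l * 2 ^ ((i - 1) - 2 * l) *
            ((i : ℤ) * (((i - 1) - l).choose l : ℤ)) := by rw [hkey, e2]
        _ = (-1 : ℤ) ^ (i - 1) * (i : ℤ) *
            ((-1 : ℤ) ^ l * 2 ^ ((i - 1) - 2 * l) * (((i - 1) - l).choose l : ℤ)) := by ring
  rw [hstep]
  have hfill : ∑ l ∈ (Finset.range i).filter (fun l => 2 * l < i),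
        (-1 : ℤ) ^ (i - 1) * (i : ℤ) *
          ((-1 : ℤ) ^ l * 2 ^ ((i - 1) - 2 * l) * (((i - 1) - l).choose l : ℤ))
      = ∑ l ∈ Finset.range i,
        (-1 : ℤ) ^ (i - 1) * (i : ℤ) *
          ((-1 : ℤ) ^ l * 2 ^ ((i - 1) - 2 * l) * (((i - 1) - l).choose l : ℤ)) := by
    apply Finset.sum_subset (Finset.filter_subset _ _)
    intro l hl hnl
    simp only [Finset.mem_filter, Finset.mem_range] at hl hnl
    have h2l : i ≤ 2 * l := by omega
    have hz : ((i - 1) - l).choose l = 0 := Nat.choose_eq_zero_of_lt (by omega)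
    rw [hz]
    push_cast
    ring
  rw [hfill, ← Finset.mul_sum]
  have hrange : Finset.range i = Finset.range ((i - 1) + 1) := by
    congr 1; omega
  rw [hrange]
  have := chebA_eq (i - 1)
  rw [chebA] at this
  rw [this]
  have hi1 : ((i - 1 : ℕ) : ℤ) + 1 = (i : ℤ) := by
    have : (1 : ℕ) ≤ i := hi
    push_cast [Nat.cast_sub this]
    ring
  rw [hi1]
  ring
end

section
/- Let W : ℤ → ℤ be a finitely supported function. Then Σ_{k ≥ 1} Σ_{l ≥ 0} (-1)^{l+k-1} · k · 2^{k-1} · ( C(k+l, k) + C(k+l-1, k) ) · W(k + 2l) = Σ_{i ≥ 1} (-1)^{i-1} · i² · W(i), where both sides are finite sums. -/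
open Finset Polynomial



noncomputable def yy : ℤ[X] := -(2 * X + X ^ 2)

noncomputable def HH (n : ℕ) : ℤ[X] := ∑ m ∈ range n, ((m : ℤ[X]) + 1) * yy ^ m

lemma geom2 (n : ℕ) : ((1 : ℤ[X]) - yy) ^ 2 * HH n
    = 1 - ((n : ℤ[X]) + 1) * yy ^ n + (n : ℤ[X]) * yy ^ (n + 1) := by
  induction n with
  | zero => simp [HH]
  | succ n ih =>
    rw [HH, Finset.sum_range_succ, ← HH, mul_add, ih]
    push_cast
    ring

noncomputable def RRA (n : ℕ) : ℤ[X] :=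
  ∑ j ∈ range n, C ((-1 : ℤ) ^ j * ((j : ℤ) + 1) ^ 2) * X ^ (j + 1)

noncomputable def qq (n : ℕ) : ℤ[X] :=
  (-1 : ℤ[X]) ^ (n + 1) *
    (((n : ℤ[X]) + 1) ^ 2 + (3 * (n : ℤ[X]) ^ 2 + 4 * (n : ℤ[X])) * X
      + (3 * (n : ℤ[X]) ^ 2 + 2 * (n : ℤ[X]) - 1) * X ^ 2 + (n : ℤ[X]) ^ 2 * X ^ 3)

lemma L3 (n : ℕ) : ((1 : ℤ[X]) + X) ^ 4 * RRA n = X - X ^ 3 + X ^ (n + 1) * qq n := by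
  induction n with
  | zero =>
    simp only [RRA, range_zero, Finset.sum_empty, mul_zero, qq]
    push_cast
    ring
  | succ n ih =>
    rw [RRA, Finset.sum_range_succ, ← RRA, mul_add, ih, qq, qq]
    have hC : (C ((-1 : ℤ) ^ n * ((n : ℤ) + 1) ^ 2) : ℤ[X])
        = (-1 : ℤ[X]) ^ n * ((n : ℤ[X]) + 1) ^ 2 := by
      simp [map_mul, map_pow, map_add]
    rw [hC]
    push_cast
    ring

lemma L2 (i : ℕ) : ∃ r : ℤ[X], ((1 : ℤ[X]) + X) ^ 4 * (X * HH (2*i+2) - X ^ 3 * HH (2*i+2))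
    = X - X ^ 3 + X ^ (i + 1) * r := by
  have hg := geom2 (2*i+2)
  refine ⟨(X - X^3) * X^(i+1) * (-(((2*i+2 : ℕ) : ℤ[X]) + 1) * (-(2+X))^(2*i+2)
    + ((2*i+2 : ℕ) : ℤ[X]) * (X * (-(2+X))^(2*i+2+1))), ?_⟩
  have h1 : ((1:ℤ[X]) + X)^4 * (X * HH (2*i+2) - X^3 * HH (2*i+2))
      = (X - X^3) * (((1:ℤ[X]) - yy)^2 * HH (2*i+2)) := by
    rw [yy]; ring
  rw [h1, hg]
  have hy : (yy : ℤ[X]) = X * (-(2+X)) := by rw [yy]; ring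
  rw [hy]
  simp only [mul_pow]
  push_cast
  ring

lemma coeff_zero_of_dvd {p : ℤ[X]} {n : ℕ} (h : ∃ r, ((1:ℤ[X])+X)^4 * p = X^n * r)
    {i : ℕ} (hi : i < n) : p.coeff i = 0 := by
  obtain ⟨r, hr⟩ := h
  have hxy : IsCoprime (X : ℤ[X]) (1+X) := ⟨-1, 1, by ring⟩
  have hcop : IsCoprime ((X : ℤ[X]) ^ n) (((1:ℤ[X])+X) ^ 4) := hxy.pow
  have hdvd : (X : ℤ[X]) ^ n ∣ ((1:ℤ[X])+X)^4 * p := ⟨r, hr⟩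
  obtain ⟨q, hq⟩ := hcop.dvd_of_dvd_mul_left hdvd
  rw [hq, mul_comm, Polynomial.coeff_mul_X_pow', if_neg (by omega)]


lemma tri (F : ℕ → ℕ → ℤ) (M : ℕ) :
    ∑ m ∈ range M, ∑ k ∈ range (m + 1), F m k
      = ∑ k ∈ range M, ∑ l ∈ range (M - k), F (k + l) k := by
  induction M with
  | zero => simp
  | succ M ih =>
    rw [Finset.sum_range_succ, ih]
    conv_rhs => rw [Finset.sum_range_succ]
    have h1 : ∀ k ∈ range M, ∑ l ∈ range (M + 1 - k), F (k + l) k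
        = ∑ l ∈ range (M - k), F (k + l) k + F M k := by
      intro k hk
      have hk' : k < M := mem_range.mp hk
      have h2 : M + 1 - k = (M - k) + 1 := by omega
      rw [h2, Finset.sum_range_succ]
      congr 2
      omega
    rw [Finset.sum_congr rfl h1, Finset.sum_add_distrib]
    have h4 : ∑ l ∈ range (M + 1 - M), F (M + l) M = F M M := by
      have h3 : M + 1 - M = 1 := by omega
      rw [h3, Finset.sum_range_one, add_zero]
    rw [h4, Finset.sum_range_succ]
    ring

lemma rect_ext (F : ℕ → ℕ → ℤ) {K1 K2 K1' K2' : ℕ} (h1 : K1 ≤ K1') (h2 : K2 ≤ K2')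
    (hz : ∀ k l, F k l ≠ 0 → k < K1 ∧ l < K2) :
    ∑ k ∈ range K1', ∑ l ∈ range K2', F k l = ∑ k ∈ range K1, ∑ l ∈ range K2, F k l := by
  rw [← Finset.sum_product', ← Finset.sum_product']
  refine (Finset.sum_subset ?_ ?_).symm
  · exact Finset.product_subset_product (Finset.range_subset_range.mpr h1) (Finset.range_subset_range.mpr h2)
  · intro p hp hnp
    by_contra h
    have := hz p.1 p.2 h
    simp only [Finset.mem_product, Finset.mem_range] at hnp
    omega

lemma ds_gen (h : ℕ → ℕ → ℤ) (q : ℕ → ℕ → Prop) [DecidablePred fun p : ℕ × ℕ => q p.1 p.2]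
    [∀ k l, Decidable (q k l)]
    {K1 K2 K1' K2' : ℕ}
    (hb : ∀ k l, q k l → k < K1 ∧ l < K2) (hb' : ∀ k l, q k l → k < K1' ∧ l < K2') :
    ∑ k ∈ range K1, ∑ l ∈ range K2, (if q k l then h k l else 0)
      = ∑ k ∈ range K1', ∑ l ∈ range K2', (if q k l then h k l else 0) := by
  have key : ∀ k l, (if q k l then h k l else 0) ≠ 0 → q k l := by
    intro k l hne
    by_contra hq
    simp [hq] at hne
  trans ∑ k ∈ range (max K1 K1'), ∑ l ∈ range (max K2 K2'), (if q k l then h k l else 0)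
  · exact (rect_ext _ (le_max_left _ _) (le_max_left _ _)
      (fun k l hne => hb k l (key k l hne))).symm
  · exact rect_ext _ (le_max_right _ _) (le_max_right _ _)
      (fun k l hne => hb' k l (key k l hne))

noncomputable def ww (m k : ℕ) : ℤ := ((m : ℤ) + 1) * (-1) ^ m * 2 ^ k * (m.choose k : ℤ)

noncomputable def cc1 (k l : ℕ) : ℤ :=
  (-1) ^ (l + k) * ((k : ℤ) + 1) * 2 ^ k * ((k + l + 1).choose (k + 1) : ℤ)

lemma expandHH (c n : ℕ) : (X : ℤ[X]) ^ c * HH n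
    = ∑ m ∈ range n, ∑ k ∈ range (m + 1), C (ww m k) * X ^ (2 * m - k + c) := by
  rw [HH, Finset.mul_sum]
  refine Finset.sum_congr rfl fun m _ => ?_
  have hy : yy ^ m = (-1 : ℤ[X]) ^ m * ((X : ℤ[X]) ^ m * (2 + X) ^ m) := by
    rw [← mul_pow, ← mul_pow]
    congr 1
    rw [yy]; ring
  rw [hy, add_pow, Finset.mul_sum, Finset.mul_sum, Finset.mul_sum, Finset.mul_sum]
  refine Finset.sum_congr rfl fun k hk => ?_
  have hk' : k ≤ m := by
    have := mem_range.mp hk; omega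
  have he : 2 * m - k + c = c + (m + (m - k)) := by omega
  rw [he, pow_add, pow_add]
  simp only [ww, map_mul, map_pow, map_neg, map_one, map_add, Polynomial.C_1, Polynomial.C_eq_natCast, map_ofNat]
  ring

lemma L1 (c i : ℕ) :
    ((X : ℤ[X]) ^ c * HH (2 * i + 2)).coeff i
      = ∑ k ∈ range (i + 1), ∑ l ∈ range (i + 1),
          (if k + 2 * l + c = i then cc1 k l else 0) := by
  set n := 2 * i + 2 with hn
  rw [expandHH, Polynomial.finset_sum_coeff]
  simp only [Polynomial.finset_sum_coeff, Polynomial.coeff_C_mul, Polynomial.coeff_X_pow,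
    mul_ite, mul_one, mul_zero]
  rw [tri (fun m k => if i = 2 * m - k + c then ww m k else 0) n]
  have step1 : ∀ k ∈ range n, ∑ l ∈ range (n - k), (if i = 2 * (k + l) - k + c then ww (k + l) k else 0)
      = ∑ l ∈ range n, (if k + 2 * l + c = i then cc1 k l else 0) := by
    intro k hk
    have hkn : k < n := mem_range.mp hk
    have hsub : ∀ l ∈ range n, l ∉ range (n - k) → (if k + 2 * l + c = i then cc1 k l else 0) = 0 := by
      intro l hl hnl
      rw [if_neg]
      have hl1 := mem_range.mp hl
      have hl2 : ¬ l < n - k := fun hc => hnl (mem_range.mpr hc)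
      omega
    rw [← Finset.sum_subset (Finset.range_subset_range.mpr (by omega : n - k ≤ n)) hsub]
    refine Finset.sum_congr rfl fun l _ => ?_
    have hcond : (i = 2 * (k + l) - k + c) ↔ (k + 2 * l + c = i) := by omega
    by_cases h : k + 2 * l + c = i
    · rw [if_pos (hcond.mpr h), if_pos h]
      have hch := Nat.add_one_mul_choose_eq (k + l) k
      have hch' : ((k + l : ℤ) + 1) * ((k + l).choose k : ℤ)
          = ((k + l + 1).choose (k + 1) : ℤ) * ((k : ℤ) + 1) := by
        exact_mod_cast congrArg (Nat.cast : ℕ → ℤ) hch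
      simp only [ww, cc1]
      have hpow : (-1 : ℤ) ^ (l + k) = (-1) ^ (k + l) := by rw [add_comm]
      rw [hpow]
      push_cast
      linear_combination ((-1 : ℤ) ^ (k + l) * 2 ^ k) * hch'
    · rw [if_neg (fun hc => h (hcond.mp hc)), if_neg h]
  rw [Finset.sum_congr rfl step1]
  refine ds_gen cc1 (fun k l => k + 2 * l + c = i) ?_ ?_
  · intro k l h; constructor <;> omega
  · intro k l h; constructor <;> omega

noncomputable def cc2 (k l : ℕ) : ℤ :=
  (-1) ^ (l + k) * ((k : ℤ) + 1) * 2 ^ k * ((k + l).choose (k + 1) : ℤ)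

noncomputable def gcoef (k l : ℕ) : ℤ :=
  if 1 ≤ k then
    (-1 : ℤ) ^ (l + k - 1) * k * 2 ^ (k - 1) *
      (((k + l).choose k : ℤ) + ((k + l - 1).choose k : ℤ))
  else 0

lemma gcoef_succ (k l : ℕ) : gcoef (k + 1) l = cc1 k l + cc2 k l := by
  simp only [gcoef, if_pos (by omega : 1 ≤ k + 1)]
  have e1 : l + (k + 1) - 1 = l + k := by omega
  have e2 : k + 1 - 1 = k := by omega
  have e3 : k + 1 + l = k + l + 1 := by omega
  have e4 : k + l + 1 - 1 = k + l := by omega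
  rw [e1, e2, e3, e4]
  simp only [cc1, cc2]
  push_cast
  ring

lemma key (i : ℕ) (hi : 1 ≤ i) :
    ∑ k ∈ range (i + 1), ∑ l ∈ range (i + 1), (if k + 2 * l = i then gcoef k l else 0)
      = (-1) ^ (i - 1) * (i : ℤ) ^ 2 := by
  -- peel k = 0 and shift
  rw [Finset.sum_range_succ' (fun k => ∑ l ∈ range (i + 1), (if k + 2 * l = i then gcoef k l else 0)) i]
  have hzero : (∑ l ∈ range (i + 1), (if 0 + 2 * l = i then gcoef 0 l else 0)) = 0 := by
    refine Finset.sum_eq_zero fun l _ => ?_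
    simp [gcoef]
  rw [hzero, add_zero]
  -- split gcoef (k+1) l = cc1 + cc2 and the ite
  have hsplit : ∀ k ∈ range i, ∑ l ∈ range (i + 1), (if k + 1 + 2 * l = i then gcoef (k + 1) l else 0)
      = (∑ l ∈ range (i + 1), (if k + 2 * l + 1 = i then cc1 k l else 0))
        + ∑ l ∈ range (i + 1), (if k + 2 * l + 1 = i then cc2 k l else 0) := by
    intro k _
    rw [← Finset.sum_add_distrib]
    refine Finset.sum_congr rfl fun l _ => ?_
    rw [gcoef_succ]
    by_cases h : k + 2 * l + 1 = i
    · rw [if_pos (by omega), if_pos h, if_pos h]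
    · rw [if_neg (by omega), if_neg h, if_neg h, add_zero]
  rw [Finset.sum_congr rfl hsplit, Finset.sum_add_distrib]
  -- handle the cc2 part : peel l = 0 and shift
  have hcc2 : ∀ k ∈ range i, ∑ l ∈ range (i + 1), (if k + 2 * l + 1 = i then cc2 k l else 0)
      = - ∑ l ∈ range i, (if k + 2 * l + 3 = i then cc1 k l else 0) := by
    intro k _
    rw [Finset.sum_range_succ' (fun l => if k + 2 * l + 1 = i then cc2 k l else 0) i]
    have h0 : (if k + 2 * 0 + 1 = i then cc2 k 0 else 0) = 0 := by
      have : cc2 k 0 = 0 := by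
        simp [cc2, Nat.choose_eq_zero_of_lt (by omega : k < k + 1)]
      simp [this]
    rw [h0, add_zero, ← Finset.sum_neg_distrib]
    refine Finset.sum_congr rfl fun l _ => ?_
    have hval : cc2 k (l + 1) = - cc1 k l := by
      simp only [cc1, cc2]
      have e1 : k + (l + 1) = k + l + 1 := by omega
      have e2 : l + 1 + k = (l + k) + 1 := by omega
      rw [e1, e2, pow_succ]
      ring
    by_cases h : k + 2 * l + 3 = i
    · rw [if_pos (by omega), if_pos h, hval]
    · rw [if_neg (by omega), if_neg h, neg_zero]
  rw [Finset.sum_congr rfl hcc2]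
  -- now identify with polynomial coefficients
  have hds1 : ∑ k ∈ range i, ∑ l ∈ range (i + 1), (if k + 2 * l + 1 = i then cc1 k l else 0)
      = ∑ k ∈ range (i + 1), ∑ l ∈ range (i + 1), (if k + 2 * l + 1 = i then cc1 k l else 0) := by
    refine ds_gen cc1 (fun k l => k + 2 * l + 1 = i) ?_ ?_ <;>
      · intro k l h; constructor <;> omega
  have hds3 : ∑ k ∈ range i, (- ∑ l ∈ range i, (if k + 2 * l + 3 = i then cc1 k l else 0))
      = - ∑ k ∈ range (i + 1), ∑ l ∈ range (i + 1), (if k + 2 * l + 3 = i then cc1 k l else 0) := by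
    rw [Finset.sum_neg_distrib]
    congr 1
    refine ds_gen cc1 (fun k l => k + 2 * l + 3 = i) ?_ ?_ <;>
      · intro k l h; constructor <;> omega
  rw [hds1, hds3, ← L1 1 i, ← L1 3 i]
  have hp : (X : ℤ[X]) ^ 1 * HH (2 * i + 2) = X * HH (2 * i + 2) := by rw [pow_one]
  rw [hp]
  -- compare with RRA via divisibility
  have hdvd : ∃ r : ℤ[X], ((1 : ℤ[X]) + X) ^ 4 *
      ((X * HH (2 * i + 2) - X ^ 3 * HH (2 * i + 2)) - RRA (i + 1)) = X ^ (i + 1) * r := by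
    obtain ⟨r2, h2⟩ := L2 i
    refine ⟨r2 - X * qq (i + 1), ?_⟩
    rw [mul_sub, h2, L3 (i + 1)]
    ring
  have hco := coeff_zero_of_dvd hdvd (by omega : i < i + 1)
  rw [Polynomial.coeff_sub, Polynomial.coeff_sub, sub_eq_zero] at hco
  rw [← sub_eq_add_neg, hco]
  -- compute the coefficient of RRA (i+1)
  rw [RRA, Polynomial.finset_sum_coeff]
  simp only [Polynomial.coeff_C_mul, Polynomial.coeff_X_pow, mul_ite, mul_one, mul_zero]
  rw [Finset.sum_eq_single (i - 1)]
  · rw [if_pos (by omega)]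
    have : ((i - 1 : ℕ) : ℤ) + 1 = (i : ℤ) := by omega
    rw [this]
  · intro b _ hb
    rw [if_neg (by omega)]
  · intro hb
    exact absurd (mem_range.mpr (by omega)) hb

/-- For a finitely supported `W : ℤ → ℤ`,
`Σ_{k ≥ 1} Σ_{l ≥ 0} (-1)^(l+k-1) k 2^(k-1) (C(k+l,k) + C(k+l-1,k)) W(k+2l)
 = Σ_{i ≥ 1} (-1)^(i-1) i² W(i)`. -/
theorem genus_decreasing_formula_arith (W : ℤ → ℤ) (hW : (Function.support W).Finite) :
    (∑ᶠ (k : ℕ) (l : ℕ),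
      (if 1 ≤ k then
        (-1 : ℤ) ^ (l + k - 1) * k * 2 ^ (k - 1) *
          (((k + l).choose k : ℤ) + ((k + l - 1).choose k : ℤ)) * W ((k : ℤ) + 2 * l)
       else 0))
    = ∑ᶠ (i : ℕ), (if 1 ≤ i then (-1 : ℤ) ^ (i - 1) * (i : ℤ) ^ 2 * W (i : ℤ) else 0) := by
  classical
  set N := hW.toFinset.sup (fun x => x.toNat) + 1 with hN
  have hWN : ∀ n : ℕ, N ≤ n → W (n : ℤ) = 0 := by
    intro n hn
    by_contra h
    have hmem : (n : ℤ) ∈ hW.toFinset := hW.mem_toFinset.mpr h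
    have hle := Finset.le_sup (f := fun x : ℤ => x.toNat) hmem
    simp only [Int.toNat_natCast] at hle
    omega
  have hterm0 : ∀ k l : ℕ, N ≤ k + 2 * l →
      (if 1 ≤ k then (-1 : ℤ) ^ (l + k - 1) * k * 2 ^ (k - 1) *
          (((k + l).choose k : ℤ) + ((k + l - 1).choose k : ℤ)) * W ((k : ℤ) + 2 * l)
       else 0) = 0 := by
    intro k l hkl
    have hw : W ((k : ℤ) + 2 * l) = 0 := by
      have hc : ((k : ℤ) + 2 * l) = ((k + 2 * l : ℕ) : ℤ) := by push_cast; ring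
      rw [hc]; exact hWN _ hkl
    rw [hw, mul_zero, ite_self]
  have hinner : ∀ k : ℕ,
      (∑ᶠ (l : ℕ), (if 1 ≤ k then (-1 : ℤ) ^ (l + k - 1) * k * 2 ^ (k - 1) *
          (((k + l).choose k : ℤ) + ((k + l - 1).choose k : ℤ)) * W ((k : ℤ) + 2 * l) else 0))
      = ∑ l ∈ range N, (if 1 ≤ k then (-1 : ℤ) ^ (l + k - 1) * k * 2 ^ (k - 1) *
          (((k + l).choose k : ℤ) + ((k + l - 1).choose k : ℤ)) * W ((k : ℤ) + 2 * l) else 0) := by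
    intro k
    refine finsum_eq_sum_of_support_subset _ ?_
    intro l hl
    simp only [Function.mem_support] at hl
    simp only [Finset.coe_range, Set.mem_Iio]
    by_contra hc
    exact hl (hterm0 k l (by omega))
  rw [finsum_congr hinner]
  have houter : (∑ᶠ (k : ℕ), ∑ l ∈ range N, (if 1 ≤ k then (-1 : ℤ) ^ (l + k - 1) * k * 2 ^ (k - 1) *
          (((k + l).choose k : ℤ) + ((k + l - 1).choose k : ℤ)) * W ((k : ℤ) + 2 * l) else 0))
      = ∑ k ∈ range N, ∑ l ∈ range N, (if 1 ≤ k then (-1 : ℤ) ^ (l + k - 1) * k * 2 ^ (k - 1) *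
          (((k + l).choose k : ℤ) + ((k + l - 1).choose k : ℤ)) * W ((k : ℤ) + 2 * l) else 0) := by
    refine finsum_eq_sum_of_support_subset _ ?_
    intro k hk
    simp only [Function.mem_support] at hk
    simp only [Finset.coe_range, Set.mem_Iio]
    by_contra hc
    exact hk (Finset.sum_eq_zero fun l _ => hterm0 k l (by omega))
  rw [houter]
  have hrhs : (∑ᶠ (i : ℕ), (if 1 ≤ i then (-1 : ℤ) ^ (i - 1) * (i : ℤ) ^ 2 * W (i : ℤ) else 0))
      = ∑ i ∈ range (3 * N), (if 1 ≤ i then (-1 : ℤ) ^ (i - 1) * (i : ℤ) ^ 2 * W (i : ℤ) else 0) := by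
    refine finsum_eq_sum_of_support_subset _ ?_
    intro i hi
    simp only [Function.mem_support] at hi
    simp only [Finset.coe_range, Set.mem_Iio]
    by_contra hc
    have : W (i : ℤ) = 0 := hWN i (by omega)
    rw [this, mul_zero, ite_self] at hi
    exact hi rfl
  rw [hrhs]
  have hstep : ∀ k ∈ range N, ∀ l ∈ range N,
      (if 1 ≤ k then (-1 : ℤ) ^ (l + k - 1) * k * 2 ^ (k - 1) *
          (((k + l).choose k : ℤ) + ((k + l - 1).choose k : ℤ)) * W ((k : ℤ) + 2 * l) else 0)
      = ∑ i ∈ range (3 * N), (if k + 2 * l = i then gcoef k l * W (i : ℤ) else 0) := by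
    intro k hk l hl
    rw [Finset.sum_ite_eq (range (3 * N)) (k + 2 * l) (fun i => gcoef k l * W (i : ℤ))]
    rw [if_pos (mem_range.mpr (by have := mem_range.mp hk; have := mem_range.mp hl; omega))]
    simp only [gcoef, ite_mul, zero_mul]
    have hc : ((k + 2 * l : ℕ) : ℤ) = (k : ℤ) + 2 * l := by push_cast; ring
    rw [hc]
  rw [Finset.sum_congr rfl (fun k hk => Finset.sum_congr rfl (fun l hl => hstep k hk l hl))]
  rw [Finset.sum_congr rfl (fun k (_ : k ∈ range N) => Finset.sum_comm (s := range N)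
    (t := range (3 * N)) (f := fun l i => if k + 2 * l = i then gcoef k l * W (i : ℤ) else 0))]
  rw [Finset.sum_comm]
  refine Finset.sum_congr rfl fun i _ => ?_
  have hfac : (∑ i_1 ∈ range N, ∑ l ∈ range N, if i_1 + 2 * l = i then gcoef i_1 l * W (i : ℤ) else 0)
      = W (i : ℤ) * ∑ k ∈ range N, ∑ l ∈ range N, (if k + 2 * l = i then gcoef k l else 0) := by
    rw [Finset.mul_sum]
    refine Finset.sum_congr rfl fun k _ => ?_
    rw [Finset.mul_sum]
    refine Finset.sum_congr rfl fun l _ => ?_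
    by_cases h : k + 2 * l = i
    · rw [if_pos h, if_pos h]; ring
    · rw [if_neg h, if_neg h, mul_zero]
  rw [hfac]
  rcases lt_or_ge i N with hiN | hiN
  · have hcan : (∑ k ∈ range N, ∑ l ∈ range N, (if k + 2 * l = i then gcoef k l else 0))
        = ∑ k ∈ range (i + 1), ∑ l ∈ range (i + 1), (if k + 2 * l = i then gcoef k l else 0) := by
      refine ds_gen gcoef (fun k l => k + 2 * l = i) ?_ ?_ <;>
        · intro k l h; constructor <;> omega
    rw [hcan]
    rcases Nat.eq_zero_or_pos i with h0 | h1
    · subst h0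
      simp [gcoef]
    · rw [key i h1, if_pos (show 1 ≤ i from h1)]
      ring
  · have hw : W (i : ℤ) = 0 := hWN i hiN
    rw [hw, zero_mul, mul_zero, ite_self]
end

section
/- For every integer i ≥ 1, u_{i+2} - u_{i+1} = u_{i+1} - u_i + v_{i+1}. -/
/-- `u j = Σ_{(k,l) : k ≥ 1, l ≥ 0, k+2l=j} (-1)^l · k · 2^(k-1) · C(k+l, k)`. -/
def u (j : ℕ) : ℤ :=
  ∑ p ∈ (Finset.range (j + 1) ×ˢ Finset.range (j + 1)).filter
      (fun p => 1 ≤ p.1 ∧ p.1 + 2 * p.2 = j),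
    (-1 : ℤ) ^ p.2 * p.1 * 2 ^ (p.1 - 1) * ((p.1 + p.2).choose p.1 : ℤ)

/-- `v j = Σ_{(k,l) : k ≥ 0, l ≥ 0, k+2l=j} (-1)^l · 2^k · C(k+l, k)`. -/
def v (j : ℕ) : ℤ :=
  ∑ p ∈ (Finset.range (j + 1) ×ˢ Finset.range (j + 1)).filter
      (fun p => p.1 + 2 * p.2 = j),
    (-1 : ℤ) ^ p.2 * 2 ^ p.1 * ((p.1 + p.2).choose p.1 : ℤ)

/-- single-index term of `u`. -/
def a (j l : ℕ) : ℤ :=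
  (-1 : ℤ) ^ l * ((j : ℤ) - 2 * l) * 2 ^ (j - 2 * l - 1) * ((j - l).choose l : ℤ)

/-- single-index term of `v`. -/
def g (j l : ℕ) : ℤ :=
  (-1 : ℤ) ^ l * 2 ^ (j - 2 * l) * ((j - l).choose l : ℤ)

lemma a_vanish (j l : ℕ) (h : j ≤ 2 * l) : a j l = 0 := by
  rcases eq_or_lt_of_le h with h | h
  · have : ((j : ℤ) - 2 * l) = 0 := by push_cast; omega
    rw [a, this]; ring
  · have : (j - l).choose l = 0 := Nat.choose_eq_zero_of_lt (by omega)
    rw [a, this]; push_cast; ring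

lemma g_vanish (j l : ℕ) (h : j < 2 * l) : g j l = 0 := by
  have : (j - l).choose l = 0 := Nat.choose_eq_zero_of_lt (by omega)
  rw [g, this]; push_cast; ring

lemma key_s3 (j m : ℕ) :
    a (j + 2) (m + 1) = 2 * a (j + 1) (m + 1) + g (j + 1) (m + 1) - a j m := by
  obtain h | h | h | h : j < 2 * m ∨ 2 * m = j ∨ 2 * m + 1 = j ∨ 2 * m + 2 ≤ j := by omega
  · -- everything vanishes
    rw [a_vanish (j+2) (m+1) (by omega), a_vanish (j+1) (m+1) (by omega),
      g_vanish (j+1) (m+1) (by omega), a_vanish j m (by omega)]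
    ring
  · -- 2m = j
    rw [a_vanish (j+2) (m+1) (by omega), a_vanish (j+1) (m+1) (by omega),
      a_vanish j m (by omega)]
    have : (j + 1 - (m + 1)).choose (m + 1) = 0 :=
      Nat.choose_eq_zero_of_lt (by omega)
    rw [g, this]; push_cast; ring
  · -- 2m + 1 = j
    subst h
    have e1 : 2 * m + 1 + 2 - (m + 1) = m + 2 := by omega
    have e2 : 2 * m + 1 + 2 - 2 * (m + 1) - 1 = 0 := by omega
    have e3 : 2 * m + 1 + 1 - (m + 1) = m + 1 := by omega
    have e4 : 2 * m + 1 + 1 - 2 * (m + 1) = 0 := by omega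
    have e5 : 2 * m + 1 - m = m + 1 := by omega
    have e6 : 2 * m + 1 - 2 * m - 1 = 0 := by omega
    rw [a_vanish (2*m+1+1) (m+1) (by omega)]
    rw [a, g, a, e1, e2, e3, e4, e5, e6]
    have h1 : (m + 1).choose m = m + 1 := by
      have h := Nat.choose_symm (Nat.le_succ m)
      rw [show m.succ - m = 1 from by omega, Nat.choose_one_right] at h
      simpa [Nat.succ_eq_add_one] using h.symm
    rw [Nat.choose_succ_succ (m + 1) m, Nat.succ_eq_add_one, Nat.choose_self, h1]
    push_cast
    ring
  · obtain ⟨d, rfl⟩ : ∃ d, j = 2 * m + 2 + d := ⟨j - (2 * m + 2), by omega⟩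
    have e1 : 2 * m + 2 + d + 2 - (m + 1) = m + d + 3 := by omega
    have e2 : 2 * m + 2 + d + 2 - 2 * (m + 1) - 1 = d + 1 := by omega
    have e3 : 2 * m + 2 + d + 1 - (m + 1) = m + d + 2 := by omega
    have e4 : 2 * m + 2 + d + 1 - 2 * (m + 1) - 1 = d := by omega
    have e5 : 2 * m + 2 + d + 1 - 2 * (m + 1) = d + 1 := by omega
    have e6 : 2 * m + 2 + d - m = m + d + 2 := by omega
    have e7 : 2 * m + 2 + d - 2 * m - 1 = d + 1 := by omega
    rw [a, a, g, a, e1, e2, e3, e4, e5, e6, e7]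
    have pascal : (m + d + 3).choose (m + 1)
        = (m + d + 2).choose m + (m + d + 2).choose (m + 1) :=
      Nat.choose_succ_succ (m + d + 2) m
    rw [pascal]
    push_cast
    ring

def F (j : ℕ) : ℤ := ∑ l ∈ Finset.range (j + 1), a j l
def G (j : ℕ) : ℤ := ∑ l ∈ Finset.range (j + 1), g j l

lemma Frec (j : ℕ) : F (j + 2) = 2 * F (j + 1) + G (j + 1) - F j := by
  have h1 : F (j + 2)
      = ∑ m ∈ Finset.range (j + 2), a (j + 2) (m + 1) + a (j + 2) 0 :=
    Finset.sum_range_succ' _ _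
  have h2 : ∑ m ∈ Finset.range (j + 2), a (j + 2) (m + 1)
      = ∑ m ∈ Finset.range (j + 2),
        (2 * a (j + 1) (m + 1) + g (j + 1) (m + 1) - a j m) :=
    Finset.sum_congr rfl (fun m _ => key_s3 j m)
  have h3 : ∑ m ∈ Finset.range (j + 2),
        (2 * a (j + 1) (m + 1) + g (j + 1) (m + 1) - a j m)
      = (∑ m ∈ Finset.range (j + 2), 2 * a (j + 1) (m + 1))
        + (∑ m ∈ Finset.range (j + 2), g (j + 1) (m + 1))
        - ∑ m ∈ Finset.range (j + 2), a j m := by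
    rw [Finset.sum_sub_distrib, Finset.sum_add_distrib]
  have h4 : ∑ m ∈ Finset.range (j + 2), a (j + 1) (m + 1)
      = F (j + 1) - a (j + 1) 0 := by
    have h := Finset.sum_range_succ' (a (j + 1)) (j + 2)
    have hz : a (j + 1) (j + 2) = 0 := a_vanish _ _ (by omega)
    rw [Finset.sum_range_succ, hz, add_zero] at h
    rw [F]; linarith
  have h4' : ∑ m ∈ Finset.range (j + 2), 2 * a (j + 1) (m + 1)
      = 2 * (F (j + 1) - a (j + 1) 0) := by
    rw [← Finset.mul_sum, h4]
  have h5 : ∑ m ∈ Finset.range (j + 2), g (j + 1) (m + 1)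
      = G (j + 1) - g (j + 1) 0 := by
    have h := Finset.sum_range_succ' (g (j + 1)) (j + 2)
    have hz : g (j + 1) (j + 2) = 0 := g_vanish _ _ (by omega)
    rw [Finset.sum_range_succ, hz, add_zero] at h
    rw [G]; linarith
  have h6 : ∑ m ∈ Finset.range (j + 2), a j m = F j := by
    rw [F, Finset.sum_range_succ, a_vanish j (j + 1) (by omega), add_zero]
  have hb : a (j + 2) 0 - 2 * a (j + 1) 0 - g (j + 1) 0 = 0 := by
    simp only [a, g, pow_zero, Nat.mul_zero, Nat.sub_zero, Nat.choose_zero_right,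
      Nat.cast_zero, Nat.cast_one, mul_zero, sub_zero, one_mul, mul_one]
    have h2p : (2 : ℤ) ^ (j + 2 - 1) = 2 * 2 ^ (j + 1 - 1) := by
      rw [show j + 2 - 1 = (j + 1 - 1) + 1 from by omega, pow_succ]; ring
    rw [h2p, show j + 1 - 1 = j from by omega]
    push_cast
    ring
  rw [h1, h2, h3, h4', h5, h6]
  linarith

lemma u_eq (j : ℕ) : u j = F j := by
  rw [u, F]
  rw [← Finset.sum_subset
      (Finset.filter_subset (fun l => 2 * l + 1 ≤ j) (Finset.range (j + 1)))
      (fun x hx2 hx1 => a_vanish j x (by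
        simp only [Finset.mem_filter, Finset.mem_range] at hx1 hx2
        omega))]
  refine Finset.sum_nbij' (fun p => p.2) (fun l => (j - 2 * l, l)) ?_ ?_ ?_ ?_ ?_
  · rintro ⟨k, l⟩ hp
    simp only [Finset.mem_filter, Finset.mem_product, Finset.mem_range] at hp ⊢
    omega
  · intro l hl
    simp only [Finset.mem_filter, Finset.mem_product, Finset.mem_range] at hl ⊢
    omega
  · rintro ⟨k, l⟩ hp
    simp only [Finset.mem_filter, Finset.mem_product, Finset.mem_range] at hp
    simp only [Prod.mk.injEq, and_true]
    omega
  · intro l hl; rfl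
  · rintro ⟨k, l⟩ hp
    simp only [Finset.mem_filter, Finset.mem_product, Finset.mem_range] at hp
    obtain ⟨⟨hk, hl⟩, hk1, heq⟩ := hp
    dsimp only
    rw [a]
    have h2 : (k + l).choose k = (j - l).choose l := by
      have h := Nat.choose_symm (show l ≤ k + l by omega)
      rw [show k + l - l = k from by omega] at h
      rw [h, show k + l = j - l from by omega]
    rw [h2, show k = j - 2 * l from by omega,
      show ((j - 2 * l : ℕ) : ℤ) = (j : ℤ) - 2 * l from by omega]

lemma v_eq (j : ℕ) : v j = G j := by
  rw [v, G]
  rw [← Finset.sum_subset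
      (Finset.filter_subset (fun l => 2 * l ≤ j) (Finset.range (j + 1)))
      (fun x hx2 hx1 => g_vanish j x (by
        simp only [Finset.mem_filter, Finset.mem_range] at hx1 hx2
        omega))]
  refine Finset.sum_nbij' (fun p => p.2) (fun l => (j - 2 * l, l)) ?_ ?_ ?_ ?_ ?_
  · rintro ⟨k, l⟩ hp
    simp only [Finset.mem_filter, Finset.mem_product, Finset.mem_range] at hp ⊢
    omega
  · intro l hl
    simp only [Finset.mem_filter, Finset.mem_product, Finset.mem_range] at hl ⊢
    omega
  · rintro ⟨k, l⟩ hp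
    simp only [Finset.mem_filter, Finset.mem_product, Finset.mem_range] at hp
    simp only [Prod.mk.injEq, and_true]
    omega
  · intro l hl; rfl
  · rintro ⟨k, l⟩ hp
    simp only [Finset.mem_filter, Finset.mem_product, Finset.mem_range] at hp
    obtain ⟨⟨hk, hl⟩, heq⟩ := hp
    dsimp only
    rw [g]
    have h2 : (k + l).choose k = (j - l).choose l := by
      have h := Nat.choose_symm (show l ≤ k + l by omega)
      rw [show k + l - l = k from by omega] at h
      rw [h, show k + l = j - l from by omega]
    rw [h2, show k = j - 2 * l from by omega]

/-- For every `i ≥ 1`, `u (i+2) - u (i+1) = u (i+1) - u i + v (i+1)`. -/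
theorem u_recursion (i : ℕ) (hi : 1 ≤ i) :
    u (i + 2) - u (i + 1) = u (i + 1) - u i + v (i + 1) := by
  have h := Frec i
  rw [u_eq, u_eq, u_eq, v_eq]
  linarith
end

section
/- For every integer i ≥ 1, u_i - u_{i-2} = i², where by convention u_j = 0 for j ≤ 0. (In particular u_1 = 1, u_2 = 4, and for every i ≥ 3 one has u_i - u_{i-2} = i².) -/
/-- Single-index form of the summand of `u`. -/
def ff (j l : ℕ) : ℤ :=
  (-1 : ℤ) ^ l * ((j - 2 * l : ℕ) : ℤ) * 2 ^ (j - 2 * l - 1) * ((j - l).choose l : ℤ)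

/-- Auxiliary summand: the same without the factor `k · (1/2)`. -/
def gg (j l : ℕ) : ℤ :=
  (-1 : ℤ) ^ l * 2 ^ (j - 2 * l) * ((j - l).choose l : ℤ)

def UU (j : ℕ) : ℤ := ∑ l ∈ Finset.range (j + 1), ff j l

def TT (j : ℕ) : ℤ := ∑ l ∈ Finset.range (j + 1), gg j l

lemma ff_zero {j l : ℕ} (h : j ≤ 2 * l) : ff j l = 0 := by
  have h0 : j - 2 * l = 0 := by omega
  simp [ff, h0]

lemma gg_zero {j l : ℕ} (h : j < 2 * l) : gg j l = 0 := by
  have h0 : (j - l).choose l = 0 := Nat.choose_eq_zero_of_lt (by omega)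
  simp [gg, h0]

lemma sum_ff (j n : ℕ) (h : j + 1 ≤ n) : ∑ l ∈ Finset.range n, ff j l = UU j := by
  rw [UU]
  symm
  apply Finset.sum_subset (Finset.range_subset_range.2 h)
  intro x _ hx
  simp only [Finset.mem_range, not_lt] at hx
  exact ff_zero (by omega)

lemma sum_gg (j n : ℕ) (h : j + 1 ≤ n) : ∑ l ∈ Finset.range n, gg j l = TT j := by
  rw [TT]
  symm
  apply Finset.sum_subset (Finset.range_subset_range.2 h)
  intro x _ hx
  simp only [Finset.mem_range, not_lt] at hx
  exact gg_zero (by omega)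

lemma TT_rec (j : ℕ) : TT (j + 2) = 2 * TT (j + 1) - TT j := by
  have key : ∀ m : ℕ, gg (j + 2) (m + 1) = 2 * gg (j + 1) (m + 1) - gg j m := by
    intro m
    rcases lt_trichotomy j (2 * m) with h | h | h
    · rw [gg_zero (by omega), gg_zero (by omega), gg_zero (by omega)]; ring
    · subst h
      rw [gg_zero (show 2*m+1 < 2*(m+1) by omega)]
      have e1 : 2*m + 2 - 2*(m+1) = 0 := by omega
      have e2 : 2*m + 2 - (m+1) = m + 1 := by omega
      have e3 : 2*m - 2*m = 0 := by omega
      have e4 : 2*m - m = m := by omega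
      rw [gg, gg, e1, e2, e3, e4, Nat.choose_self, Nat.choose_self]
      push_cast; ring
    · have h1 : (j+2) - 2*(m+1) = j - 2*m := by omega
      have h2 : (j+2) - (m+1) = (j - m) + 1 := by omega
      have h3 : (j+1) - 2*(m+1) = (j - 2*m) - 1 := by omega
      have h4 : (j+1) - (m+1) = j - m := by omega
      rw [gg, gg, gg, h1, h2, h3, h4, Nat.choose_succ_succ]
      have h5 : (2:ℤ) ^ (j - 2*m) = 2 * 2 ^ (j - 2*m - 1) := by
        rw [← pow_succ']
        congr 1
        omega
      rw [h5]; push_cast; ring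
  have e1 : TT (j + 2) = (∑ m ∈ Finset.range (j + 2), gg (j + 2) (m + 1)) + gg (j + 2) 0 :=
    Finset.sum_range_succ' _ _
  have e2 : (∑ m ∈ Finset.range (j + 2), gg (j + 1) (m + 1)) + gg (j + 1) 0 = TT (j + 1) := by
    rw [← Finset.sum_range_succ' (gg (j+1)) (j+2)]
    exact sum_gg (j+1) (j+3) (by omega)
  have e3 : ∑ m ∈ Finset.range (j + 2), gg j m = TT j := sum_gg j (j+2) (by omega)
  have g0 : gg (j + 2) 0 = 2 ^ (j + 2) := by simp [gg]
  have g1 : gg (j + 1) 0 = 2 ^ (j + 1) := by simp [gg]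
  rw [e1, Finset.sum_congr rfl (fun m _ => key m), Finset.sum_sub_distrib, ← Finset.mul_sum, e3,
    g0]
  have e2' : ∑ m ∈ Finset.range (j + 2), gg (j + 1) (m + 1) = TT (j+1) - 2^(j+1) := by
    rw [← e2, g1]; ring
  rw [e2']; ring

lemma TT_eq (j : ℕ) : TT j = (j : ℤ) + 1 := by
  have TT0 : TT 0 = 1 := by simp [TT, gg]
  have TT1 : TT 1 = 2 := by
    rw [TT]
    rw [Finset.sum_range_succ, Finset.sum_range_one]
    simp [gg]
  have H : ∀ n : ℕ, TT n = (n : ℤ) + 1 ∧ TT (n+1) = (n : ℤ) + 2 := by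
    intro n
    induction n with
    | zero => exact ⟨by simpa using TT0, by simpa using TT1⟩
    | succ k ih =>
      refine ⟨by rw [ih.2]; push_cast; ring, ?_⟩
      rw [TT_rec, ih.1, ih.2]; push_cast; ring
  exact (H j).1

lemma UU_rec (j : ℕ) : UU (j + 2) = 2 * UU (j + 1) - UU j + ((j : ℤ) + 2) := by
  have key : ∀ m : ℕ,
      ff (j + 2) (m + 1) = 2 * ff (j + 1) (m + 1) + gg (j + 1) (m + 1) - ff j m := by
    intro m
    rcases lt_trichotomy j (2 * m + 1) with h | h | h
    · have h' : j ≤ 2 * m := by omega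
      rw [ff_zero (by omega), ff_zero (by omega), gg_zero (by omega), ff_zero (by omega)]
      ring
    · -- j = 2m+1
      subst h
      rw [ff_zero (show 2*m+1+1 ≤ 2*(m+1) by omega)]
      have e1 : 2*m+1 + 2 - 2*(m+1) = 1 := by omega
      have e1' : 2*m+1 + 2 - 2*(m+1) - 1 = 0 := by omega
      have e2 : 2*m+1 + 2 - (m+1) = (m+1) + 1 := by omega
      have e3 : 2*m+1 + 1 - 2*(m+1) = 0 := by omega
      have e4 : 2*m+1 + 1 - (m+1) = m + 1 := by omega
      have e5 : 2*m+1 - 2*m = 1 := by omega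
      have e5' : 2*m+1 - 2*m - 1 = 0 := by omega
      have e6 : 2*m+1 - m = m + 1 := by omega
      rw [ff, gg, ff, e1, e2, e3, e4, e5, e6, Nat.choose_succ_succ, Nat.choose_self]
      push_cast; ring_nf
    · -- j ≥ 2m+2
      have h1 : (j+2) - 2*(m+1) = j - 2*m := by omega
      have h1' : (j+2) - 2*(m+1) - 1 = (j - 2*m) - 1 := by omega
      have h2 : (j+2) - (m+1) = (j - m) + 1 := by omega
      have h3 : (j+1) - 2*(m+1) = (j - 2*m) - 1 := by omega
      have h3' : (j+1) - 2*(m+1) - 1 = (j - 2*m) - 1 - 1 := by omega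
      have h4 : (j+1) - (m+1) = j - m := by omega
      rw [ff, ff, gg, ff, h1', h1, h2, h3', h3, h4, Nat.choose_succ_succ]
      have p1 : (2:ℤ) ^ (j - 2*m - 1) = 2 * 2 ^ (j - 2*m - 1 - 1) := by
        rw [← pow_succ']; congr 1; omega
      have c1 : ((j - 2*m : ℕ) : ℤ) = ((j - 2*m - 1 : ℕ) : ℤ) + 1 := by omega
      rw [p1, c1]; push_cast; ring
  have e1 : UU (j + 2) = (∑ m ∈ Finset.range (j + 2), ff (j + 2) (m + 1)) + ff (j + 2) 0 :=
    Finset.sum_range_succ' _ _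
  have e2 : (∑ m ∈ Finset.range (j + 2), ff (j + 1) (m + 1)) + ff (j + 1) 0 = UU (j + 1) := by
    rw [← Finset.sum_range_succ' (ff (j+1)) (j+2)]
    exact sum_ff (j+1) (j+3) (by omega)
  have e2g : (∑ m ∈ Finset.range (j + 2), gg (j + 1) (m + 1)) + gg (j + 1) 0 = TT (j + 1) := by
    rw [← Finset.sum_range_succ' (gg (j+1)) (j+2)]
    exact sum_gg (j+1) (j+3) (by omega)
  have e3 : ∑ m ∈ Finset.range (j + 2), ff j m = UU j := sum_ff j (j+2) (by omega)
  have f0 : ff (j + 2) 0 = ((j:ℤ) + 2) * 2 ^ (j + 1) := by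
    rw [ff]; norm_num
  have f1 : ff (j + 1) 0 = ((j:ℤ) + 1) * 2 ^ j := by
    rw [ff]; norm_num
  have g1 : gg (j + 1) 0 = 2 ^ (j + 1) := by simp [gg]
  have tv : TT (j + 1) = (j : ℤ) + 2 := by rw [TT_eq]; push_cast; ring
  rw [e1, Finset.sum_congr rfl (fun m _ => key m)]
  rw [Finset.sum_sub_distrib, Finset.sum_add_distrib, ← Finset.mul_sum, e3]
  have e2' : ∑ m ∈ Finset.range (j + 2), ff (j + 1) (m + 1) = UU (j+1) - ((j:ℤ)+1) * 2^j := by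
    rw [← e2, f1]; ring
  have e2g' : ∑ m ∈ Finset.range (j + 2), gg (j + 1) (m + 1) = TT (j+1) - 2^(j+1) := by
    rw [← e2g, g1]; ring
  rw [e2', e2g', f0, tv]; ring

lemma UU_formula (j : ℕ) : 6 * UU j = (j : ℤ) * ((j:ℤ) + 1) * ((j:ℤ) + 2) := by
  have U0 : UU 0 = 0 := by simp [UU, ff]
  have U1 : UU 1 = 1 := by
    rw [UU, Finset.sum_range_succ, Finset.sum_range_one]
    simp [ff]
  have H : ∀ n : ℕ, 6 * UU n = (n : ℤ) * ((n:ℤ) + 1) * ((n:ℤ) + 2) ∧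
      6 * UU (n+1) = ((n:ℤ)+1) * ((n:ℤ) + 2) * ((n:ℤ) + 3) := by
    intro n
    induction n with
    | zero => constructor <;> simp [U0, U1]
    | succ k ih =>
      constructor
      · push_cast
        linarith [ih.2]
      · rw [show k + 1 + 1 = k + 2 from rfl, UU_rec]
        push_cast
        nlinarith [ih.1, ih.2]
  exact (H j).1

lemma u_eq_UU (j : ℕ) : u j = UU j := by
  rw [u]
  have h1 : ∑ l ∈ (Finset.range (j+1)).filter (fun l => 2*l < j), ff j l
      = ∑ l ∈ Finset.range (j+1), ff j l :=
    Finset.sum_filter_of_ne (fun x _ hx => by by_contra hc; exact hx (ff_zero (by omega)))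
  rw [UU, ← h1]
  apply Finset.sum_bij' (i := fun p _ => p.2) (j := fun l _ => (j - 2*l, l))
  · intro p hp
    simp only [Finset.mem_filter, Finset.mem_product, Finset.mem_range] at hp ⊢
    omega
  · intro l hl
    simp only [Finset.mem_filter, Finset.mem_product, Finset.mem_range] at hl ⊢
    omega
  · intro p hp
    simp only [Finset.mem_filter, Finset.mem_product, Finset.mem_range] at hp
    ext <;> simp; omega
  · intro l hl
    rfl
  · intro p hp
    simp only [Finset.mem_filter, Finset.mem_product, Finset.mem_range] at hp
    obtain ⟨⟨hk, hl⟩, h1p, h2p⟩ := hp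
    rw [ff]
    have e1 : p.1 = j - 2 * p.2 := by omega
    have e2 : p.1 + p.2 = j - p.2 := by omega
    have e3 : (j - p.2).choose p.1 = (j - p.2).choose p.2 := by
      rw [show p.1 = (j - p.2) - p.2 by omega]
      exact Nat.choose_symm (by omega)
    rw [e2, e3, ← e1]

/-- For every `i ≥ 1`, `u i - u (i-2) = i²` (with `u j = 0` for `j ≤ 0`,
which is realized by the truncated subtraction `i - 2` together with `u 0 = 0`). -/
theorem u_difference_eq_sq (i : ℕ) (hi : 1 ≤ i) :
    u i - u (i - 2) = (i : ℤ) ^ 2 := by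
  match i, hi with
  | 1, _ =>
    have h1 := UU_formula 1
    have h0 := UU_formula 0
    rw [show (1:ℕ) - 2 = 0 from rfl, u_eq_UU, u_eq_UU]
    push_cast at h1 h0 ⊢
    nlinarith
  | (m+2), _ =>
    rw [show m + 2 - 2 = m by omega, u_eq_UU, u_eq_UU]
    have h1 := UU_formula (m+2)
    have h2 := UU_formula m
    push_cast at h1 h2 ⊢
    nlinarith
end

section
/- For all integers m ≥ 0 and n ≥ 0, Σ_{k=0}^{n} (-1)^k · ( C(m+k, m) + C'(m+k-1, m) ) · C(m+2n, n-k) equals 1 if n = 0 and equals 0 if n ≥ 1, where C'(m+k-1, m) denotes the binomial coefficient C(m+k-1, m), interpreted as 0 in the degenerate case m = k = 0 (the convention C(-1,0) = 0). -/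
private lemma inversion_kernel_step (N J M C1 C2 D0 D1 E E' : ℤ)
    (hE : E' = -E)
    (h1 : (M + J + 1) * C1 = C2 * (J + 1))
    (h2 : D0 * (N - J) = D1 * (M + N + J + 1)) :
    E * (N - J) * C1 * D0 + N * (E' * (C2 + C1) * D1)
      = E' * (N - (J + 1)) * C2 * D1 := by
  subst hE
  linear_combination E * C1 * h2 + E * D1 * h1

/-- For all `m, n ≥ 0`,
`Σ_{k=0}^{n} (-1)^k (C(m+k, m) + C'(m+k-1, m)) C(m+2n, n-k)` is `1` if `n = 0`
and `0` if `n ≥ 1`, where `C'(m+k-1, m)` is the binomial coefficient `C(m+k-1, m)`,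
interpreted as `0` when `m = k = 0` (the convention `C(-1,0) = 0`). -/
theorem inversion_kernel_orthogonality (m n : ℕ) :
    ∑ k ∈ Finset.range (n + 1),
      (-1 : ℤ) ^ k *
        (((m + k).choose m : ℤ) +
          (if m = 0 ∧ k = 0 then 0 else ((m + k - 1).choose m : ℤ))) *
        ((m + 2 * n).choose (n - k) : ℤ)
    = if n = 0 then 1 else 0 := by
  have term0 : (((m + 0).choose m : ℤ) +
      (if m = 0 ∧ (0:ℕ) = 0 then 0 else ((m + 0 - 1).choose m : ℤ))) = 1 := by
    rcases Nat.eq_zero_or_pos m with hm | hm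
    · subst hm; simp
    · rw [if_neg (by omega)]
      have h0 : (m + 0 - 1).choose m = 0 := Nat.choose_eq_zero_of_lt (by omega)
      rw [h0]
      simp
  rcases Nat.eq_zero_or_pos n with hn | hn
  · subst hn
    rw [if_pos rfl, show (0:ℕ) + 1 = 1 from rfl, Finset.sum_range_one, term0]
    simp
  · rw [if_neg (by omega)]
    have key : ∀ j, j ≤ n → (n : ℤ) *
        (∑ k ∈ Finset.range (j + 1),
          (-1 : ℤ) ^ k *
            (((m + k).choose m : ℤ) +
              (if m = 0 ∧ k = 0 then 0 else ((m + k - 1).choose m : ℤ))) *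
            ((m + 2 * n).choose (n - k) : ℤ))
        = (-1 : ℤ) ^ j * ((n : ℤ) - (j : ℤ)) * ((m + j).choose j : ℤ) *
            ((m + 2 * n).choose (n - j) : ℤ) := by
      intro j hj
      induction j with
      | zero =>
          rw [show (0:ℕ) + 1 = 1 from rfl, Finset.sum_range_one, term0]
          simp [Nat.choose_zero_right]
      | succ j ih =>
          have hle : j ≤ n := by omega
          have h1nat : (m + j + 1) * ((m + j).choose j) =
              ((m + j + 1).choose (j + 1)) * (j + 1) := Nat.add_one_mul_choose_eq (m + j) j
          have h1 : ((m : ℤ) + (j : ℤ) + 1) * ((m + j).choose j : ℤ) =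
              (((m + j + 1).choose (j + 1) : ℕ) : ℤ) * ((j : ℤ) + 1) := by
            exact_mod_cast h1nat
          have h2nat : (m + 2 * n).choose (n - j) * (n - j) =
              (m + 2 * n).choose (n - (j + 1)) * (m + n + j + 1) := by
            have e1 : n - j = (n - (j + 1)) + 1 := by omega
            rw [e1, Nat.choose_succ_right_eq]
            congr 1
            omega
          have h2 : ((m + 2 * n).choose (n - j) : ℤ) * ((n : ℤ) - (j : ℤ)) =
              ((m + 2 * n).choose (n - (j + 1)) : ℤ) *
                ((m : ℤ) + (n : ℤ) + (j : ℤ) + 1) := by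
            zify [hle] at h2nat
            linarith [h2nat]
          have hsym1 : (m + (j + 1)).choose m = (m + j + 1).choose (j + 1) :=
            Nat.choose_symm_add
          have hsym2 : (m + (j + 1) - 1).choose m = (m + j).choose j := by
            rw [show m + (j + 1) - 1 = m + j by omega]
            exact Nat.choose_symm_add
          have hcast : (((j + 1 : ℕ)) : ℤ) = (j : ℤ) + 1 := by push_cast; ring
          rw [Finset.sum_range_succ, mul_add, ih hle, if_neg (by omega), hsym1, hsym2,
            hcast]
          exact inversion_kernel_step (n : ℤ) (j : ℤ) (m : ℤ)
            ((m + j).choose j : ℤ) ((m + j + 1).choose (j + 1) : ℤ)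
            ((m + 2 * n).choose (n - j) : ℤ) ((m + 2 * n).choose (n - (j + 1)) : ℤ)
            ((-1 : ℤ) ^ j) ((-1 : ℤ) ^ (j + 1)) (by ring) h1 h2
    have hfin := key n le_rfl
    rw [sub_self] at hfin
    have hzero : (n : ℤ) * (∑ k ∈ Finset.range (n + 1),
        (-1 : ℤ) ^ k *
          (((m + k).choose m : ℤ) +
            (if m = 0 ∧ k = 0 then 0 else ((m + k - 1).choose m : ℤ))) *
          ((m + 2 * n).choose (n - k) : ℤ)) = 0 := by
      rw [hfin]; ring
    have hn' : (n : ℤ) ≠ 0 := by exact_mod_cast hn.ne'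
    exact (mul_eq_zero.mp hzero).resolve_left hn'
end

section
/- Let (z_m)_{m ≥ 0} be a finitely supported sequence of integers, and define x_m = Σ_{j ≥ 0} C(m+2j, j) · z_{m+2j} for every m ≥ 0 (a finite sum). Then for every m ≥ 0, z_m = Σ_{k ≥ 0} (-1)^k · ( C(m+k, m) + C'(m+k-1, m) ) · x_{m+2k}, where C'(m+k-1, m) denotes C(m+k-1, m), interpreted as 0 in the degenerate case m = k = 0 (the convention C(-1,0) = 0), and the sum on the right is finite. -/
/-!
The coefficients `a m k = (-1)^k (C(m+k, m) + C'(m+k-1, m))` have generating function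
`Σ_k a m k t^k = (1 - t) / (1 + t)^(m+1)`. Hence `Σ_{k ≤ n} a m k C(m+2n, n-k)` is the
`t^n`-coefficient of `(1 - t)(1 + t)^(2n-1)`, namely `C(2n-1, n) - C(2n-1, n-1) = 0`, for `n ≥ 1`,
and it is `1` for `n = 0`. Substituting the definition of `x` and collecting the terms with
`k + j = n`, the right-hand side collapses to `Σ_n δ_{n,0} z (m+2n) = z m`.
-/

open PowerSeries Finset

theorem PowerSeries.coeff_one_add_X_pow {R : Type*} [CommSemiring R] (d n : ℕ) :
    coeff n ((1 + X : R⟦X⟧) ^ d) = d.choose n := by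
  have : (1 + X : R⟦X⟧) ^ d = (((1 : Polynomial R) + Polynomial.X) ^ d).toPowerSeries := by simp
  rw [this, Polynomial.coeff_coe, Polynomial.coeff_one_add_X_pow]

theorem finsum_eq_sum_range_of_eq_zero {M : Type*} [AddCommMonoid M] {f : ℕ → M} {N : ℕ}
    (hf : ∀ n, N ≤ n → f n = 0) : ∑ᶠ n, f n = ∑ n ∈ range N, f n :=
  finsum_eq_sum_of_support_subset f fun n hn => by
    rw [coe_range, Set.mem_Iio]
    by_contra h
    exact hn (hf n (not_lt.mp h))

theorem finsum_mul_finsum_mul_apply_add_eq_apply_zero {R : Type*} [Semiring R]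
    (a : ℕ → R) (b : ℕ → ℕ → R) {y : ℕ → R} {N : ℕ} (hy : ∀ n, N ≤ n → y n = 0)
    (hab : ∀ n, ∑ k ∈ range (n + 1), a k * b n (n - k) = if n = 0 then 1 else 0) :
    ∑ᶠ k, a k * ∑ᶠ j, b (k + j) j * y (k + j) = y 0 := by
  have hinner (k : ℕ) : ∑ᶠ j, b (k + j) j * y (k + j) =
      ∑ j ∈ range (N - k), b (k + j) j * y (k + j) :=
    finsum_eq_sum_range_of_eq_zero fun j hj => by rw [hy _ (by omega), mul_zero]
  have hdiag (n : ℕ) : ∑ k ∈ range (n + 1), a k * (b (k + (n - k)) (n - k) * y (k + (n - k))) =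
      if n = 0 then y 0 else 0 := by
    rw [sum_congr rfl fun k hk => by
        rw [Nat.add_sub_cancel' (Nat.lt_succ_iff.mp (mem_range.mp hk)), ← mul_assoc],
      ← sum_mul, hab]
    split_ifs with h <;> simp [h]
  simp_rw [hinner, mul_sum]
  rw [finsum_eq_sum_range_of_eq_zero (N := N) fun k hk => by simp [Nat.sub_eq_zero_of_le hk],
    ← sum_range_diag_flip N fun k j => a k * (b (k + j) j * y (k + j))]
  simp only [hdiag, sum_ite_eq', mem_range]
  rcases N.eq_zero_or_pos with rfl | hN
  · simp [hy 0 le_rfl]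
  · simp [hN]

def inversionCoeff (m k : ℕ) : ℤ :=
  (-1) ^ k * ((m + k).choose m + if m = 0 ∧ k = 0 then 0 else ((m + k - 1).choose m : ℤ))

theorem mk_inversionCoeff (m : ℕ) :
    mk (inversionCoeff m) = (1 - X) * rescale (-1) (mk fun k => ((m + k).choose m : ℤ)) := by
  ext (_ | k) <;> rw [sub_mul, one_mul, map_sub]
  · rw [coeff_zero_X_mul, sub_zero, coeff_rescale, coeff_mk, coeff_mk]
    rcases m with _ | m <;> simp [inversionCoeff]
  · simp only [coeff_succ_X_mul, coeff_rescale, coeff_mk, inversionCoeff]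
    simp only [add_eq_zero, one_ne_zero, and_false, ↓reduceIte, pow_succ]
    rw [show m + (k + 1) - 1 = m + k by omega]
    ring

theorem mk_inversionCoeff_mul_one_add_X_pow (m : ℕ) :
    mk (inversionCoeff m) * (1 + X) ^ (m + 1) = 1 - X := by
  have h := congrArg (rescale (-1 : ℤ)) (mk_add_choose_mul_one_sub_pow_eq_one ℤ (d := m))
  rw [map_mul, map_pow, map_sub, map_one, rescale_neg_one_X, sub_neg_eq_add] at h
  rw [mk_inversionCoeff, mul_assoc, h, mul_one]

theorem sum_inversionCoeff_mul_choose (m n : ℕ) :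
    ∑ k ∈ range (n + 1), inversionCoeff m k * ((m + 2 * n).choose (n - k) : ℤ) =
      if n = 0 then 1 else 0 := by
  have hcoeff (d : ℕ) :
      ∑ k ∈ range (n + 1), inversionCoeff m k * ((m + 1 + d).choose (n - k) : ℤ) =
        coeff n ((1 - X) * (1 + X) ^ d) := by
    rw [← mk_inversionCoeff_mul_one_add_X_pow m, mul_assoc, ← pow_add, coeff_mul,
      Nat.sum_antidiagonal_eq_sum_range_succ (fun i j => coeff i _ * coeff j _)]
    simp only [coeff_mk, coeff_one_add_X_pow]
  rcases n with _ | n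
  · simpa using hcoeff 0
  · rw [show m + 2 * (n + 1) = m + 1 + (2 * n + 1) by ring, hcoeff, sub_mul, one_mul, map_sub,
      coeff_succ_X_mul, coeff_one_add_X_pow, coeff_one_add_X_pow, Nat.choose_symm_half]
    simp

/-- Sequence inversion: if `z` is finitely supported and
`x m = Σ_{j ≥ 0} C(m+2j, j) z(m+2j)`, then
`z m = Σ_{k ≥ 0} (-1)^k (C(m+k, m) + C'(m+k-1, m)) x(m+2k)`,
where `C'(m+k-1, m)` is `C(m+k-1, m)`, interpreted as `0` when `m = k = 0`
(the convention `C(-1,0) = 0`). -/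
theorem sequence_inversion (z : ℕ → ℤ) (hz : (Function.support z).Finite)
    (x : ℕ → ℤ)
    (hx : ∀ m : ℕ, x m = ∑ᶠ j : ℕ, ((m + 2 * j).choose j : ℤ) * z (m + 2 * j)) :
    ∀ m : ℕ, z m = ∑ᶠ k : ℕ,
      (-1 : ℤ) ^ k *
        (((m + k).choose m : ℤ) +
          (if m = 0 ∧ k = 0 then 0 else ((m + k - 1).choose m : ℤ))) *
        x (m + 2 * k) := by
  obtain ⟨B, hB⟩ := hz.bddAbove
  have hzB (n : ℕ) (hn : B + 1 ≤ n) : z n = 0 := by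
    by_contra h
    have := hB (Function.mem_support.mpr h)
    omega
  intro m
  have hxm (k : ℕ) :
      x (m + 2 * k) = ∑ᶠ j, ((m + 2 * (k + j)).choose j : ℤ) * z (m + 2 * (k + j)) := by
    simp only [hx, mul_add, add_assoc]
  show z m = ∑ᶠ k, inversionCoeff m k * x (m + 2 * k)
  simp only [hxm]
  exact (finsum_mul_finsum_mul_apply_add_eq_apply_zero (inversionCoeff m)
    (fun n j => ((m + 2 * n).choose j : ℤ)) (y := fun n => z (m + 2 * n)) (N := B + 1)
    (fun n hn => hzB _ (by omega)) (sum_inversionCoeff_mul_choose m)).symm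
end
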